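/- arXiv:2604.24943 — 4 statements merged into one kernel-verified Lean document; each statement's English description precedes it below -/
import Mathlib

section
/- Let τ be a vocabulary and T a first-order τ-theory. Suppose T has a model M such that every element of M is the interpretation of some constant symbol of τ, and M embeds into every model of T (M is algebraically prime). If N is a model of T satisfying the ω-rule condition — i.e., for every formula φ(x) with parameters from N, if φ(c^N) holds for every constant c of τ then N ⊨ ∀x φ(x) — then N is isomorphic to M. -/
open FirstOrder FirstOrder.Language FirstOrder.Language.Structure

universe u

/-- The inferential ω-rule condition on a τ-structure `N`: for every first-order formula
`φ(x, d̄)` with parameters `d̄` from `N`, if `φ(c, d̄)` holds for every constant symbol `c`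
of the vocabulary, then `N ⊨ ∀x φ(x, d̄)`. -/
def OmegaRuleCondition (L : FirstOrder.Language.{u, u}) (N : Type u) [L.Structure N] : Prop :=
  ∀ (n : ℕ) (φ : L.Formula (Fin n ⊕ Unit)) (d : Fin n → N),
    (∀ c : L.Constants, φ.Realize (Sum.elim d fun _ => (constantMap c : N))) →
    ∀ a : N, φ.Realize (Sum.elim d fun _ => a)

/-- If a first-order theory `T` has a model `M` in which every element is named by a constant
and which embeds into every model of `T` (is algebraically prime), then any model `N` of `T`
satisfying the ω-rule condition is isomorphic to `M`. -/
theorem statement0 (L : FirstOrder.Language.{u, u}) (T : L.Theory)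
    (M : Type u) [L.Structure M] (hMT : M ⊨ T)
    (hnamed : ∀ a : M, ∃ c : L.Constants, (constantMap c : M) = a)
    (hprime : ∀ (P : Type u) [L.Structure P], P ⊨ T → Nonempty (M ↪[L] P))
    (N : Type u) [L.Structure N] (hNT : N ⊨ T)
    (hω : OmegaRuleCondition L N) :
    Nonempty (N ≃[L] M) := by
  obtain ⟨f⟩ := hprime N hNT
  -- every element of N is named by a constant
  have hNnamed : ∀ a : N, ∃ c : L.Constants, (constantMap c : N) = a := by
    intro a
    by_contra h
    push_neg at h
    have := hω 1 (Formula.not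
        (Term.equal (Term.var (Sum.inr ())) (Term.var (Sum.inl 0)))) ![a]
      (fun c => by
        simp [Formula.Realize, Term.equal, Term.realize]
        exact h c) a
    simp [Formula.Realize, Term.equal, Term.realize] at this
  have hsurj : Function.Surjective f := by
    intro a
    obtain ⟨c, hc⟩ := hNnamed a
    exact ⟨constantMap c, by rw [f.map_constants c]; exact hc⟩
  exact ⟨(⟨Equiv.ofBijective f ⟨f.injective, hsurj⟩, f.map_fun', f.map_rel'⟩ : M ≃[L] N).symm⟩
end

section
/- In the first-order theory T of a single unary function S which is injective and whose range is the complement of a single point 0, every definable subset (with parameters) of a model is finite or cofinite; i.e., T is strongly minimal. -/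
open FirstOrder FirstOrder.Language FirstOrder.Language.Structure

/-- The signature with one constant (0) and one unary function (S). -/
def sig01 : ℕ → Type := fun n =>
  match n with
  | 0 => Unit
  | 1 => Unit
  | _ => Empty

/-- The language with constant 0 and unary function S. -/
def L01 : FirstOrder.Language := ⟨sig01, fun _ => Empty⟩

/-- The interpretation of the constant 0. -/
def z01 {M : Type*} [L01.Structure M] : M := constantMap (L := L01) (M := M) Unit.unit

/-- The interpretation of the unary function S. -/
def s01 {M : Type*} [L01.Structure M] (x : M) : M :=
  funMap (L := L01) (M := M) (n := 1) Unit.unit ![x]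

instance finite_option {α : Type*} [Finite α] : Finite (Option α) := by
  have := Fintype.ofFinite α
  infer_instance

section SM

variable {M : Type} [L01.Structure M]

/-- Local configuration equivalence of two tuples. -/
def Econf (k : ℕ) {β : Type*} (a b : β → M) : Prop :=
  ∀ i j (n : ℕ), n ≤ k → (s01^[n] (a i) = a j ↔ s01^[n] (b i) = b j)

lemma Econf_mono {k K : ℕ} (hk : k ≤ K) {β : Type*} {a b : β → M}
    (h : Econf K a b) : Econf k a b := fun i j n hn => h i j n (hn.trans hk)

lemma Econf_symm {k : ℕ} {β : Type*} {a b : β → M} (h : Econf k a b) :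
    Econf k b a := fun i j n hn => (h i j n hn).symm

lemma Econf_comp {k : ℕ} {β γ : Type*} {a b : β → M} (h : Econf k a b) (g : γ → β) :
    Econf k (a ∘ g) (b ∘ g) := fun i j n hn => h (g i) (g j) n hn

variable (hinj : Function.Injective (s01 : M → M))
  (hzero : ∀ y : M, s01 y ≠ z01)
  (hsurj : ∀ x : M, x ≠ z01 → ∃ y : M, x = s01 y)
  (hnocycle : ∀ n : ℕ, 1 ≤ n → ∀ x : M, s01^[n] x ≠ x)

include hinj in
lemma cancel01 {m1 m2 : ℕ} (h : m2 ≤ m1) (x y : M) :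
    s01^[m1] x = s01^[m2] y ↔ s01^[m1 - m2] x = y := by
  have key : s01^[m1] x = s01^[m2] (s01^[m1 - m2] x) := by
    rw [← Function.iterate_add_apply]
    congr 1
    omega
  rw [key]
  exact ⟨fun he => hinj.iterate m2 he, fun he => by rw [he]⟩

include hinj in
lemma cancel01' {m1 m2 : ℕ} (h : m1 ≤ m2) (x y : M) :
    s01^[m1] x = s01^[m2] y ↔ x = s01^[m2 - m1] y := by
  rw [eq_comm, cancel01 hinj h, eq_comm]

include hnocycle in
lemma cycle_iff (n : ℕ) (x : M) : s01^[n] x = x ↔ n = 0 := by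
  constructor
  · intro h
    by_contra hn
    exact hnocycle n (by omega) x h
  · rintro rfl; rfl

include hinj hnocycle in
lemma M_infinite : Infinite M := by
  apply Infinite.of_injective (fun n => s01^[n] (z01 : M))
  intro p q h
  rcases le_total p q with hle | hle
  · have := (cancel01 hinj hle _ _).1 h.symm
    have := (cycle_iff hnocycle _ _).1 this
    omega
  · have := (cancel01 hinj hle _ _).1 h
    have := (cycle_iff hnocycle _ _).1 this
    omega

include hsurj in
lemma pred_exists : ∀ (n : ℕ) (x : M), (∃ y, s01^[n] y = x) ∨ ∃ m, m < n ∧ s01^[m] z01 = x := by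
  intro n
  induction n with
  | zero => exact fun x => Or.inl ⟨x, rfl⟩
  | succ n ih =>
    intro x
    by_cases hx : x = z01
    · exact Or.inr ⟨0, Nat.succ_pos n, hx.symm⟩
    · obtain ⟨y, hy⟩ := hsurj x hx
      rcases ih y with ⟨w, hw⟩ | ⟨m, hm, hmz⟩
      · exact Or.inl ⟨w, by rw [Function.iterate_succ_apply', hw, ← hy]⟩
      · exact Or.inr ⟨m + 1, Nat.succ_lt_succ hm, by rw [Function.iterate_succ_apply', hmz, ← hy]⟩

include hinj in
lemma near_finite {P : Set M} (hP : P.Finite) (k : ℕ) :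
    {x : M | ∃ p ∈ P, ∃ n ≤ k, s01^[n] x = p ∨ s01^[n] p = x}.Finite := by
  have hsub : {x : M | ∃ p ∈ P, ∃ n ≤ k, s01^[n] x = p ∨ s01^[n] p = x} ⊆
      ⋃ p ∈ P, ⋃ n ∈ Finset.range (k + 1),
        ({x : M | s01^[n] x = p} ∪ {s01^[n] p}) := by
    rintro x ⟨p, hp, n, hn, h⟩
    simp only [Set.mem_iUnion, Set.mem_union, Set.mem_setOf_eq, Set.mem_singleton_iff]
    refine ⟨p, hp, n, Finset.mem_range.2 (Nat.lt_succ_of_le hn), ?_⟩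
    rcases h with h | h
    · exact Or.inl h
    · exact Or.inr h.symm
  refine Set.Finite.subset ?_ hsub
  refine hP.biUnion fun p _ => ?_
  refine (Finset.range (k + 1)).finite_toSet.biUnion fun n _ => ?_
  refine Set.Finite.union ?_ (Set.finite_singleton _)
  exact Set.Subsingleton.finite (fun x hx y hy => hinj.iterate n (hx.trans hy.symm))

include hinj in
lemma helper1 {n m : ℕ} {u x : M} (hu : s01^[n] u = x) (y : M) :
    s01^[m] u = y ↔ s01^[n] y = s01^[m] x := by
  subst hu
  constructor
  · rintro rfl
    rw [← Function.iterate_add_apply, ← Function.iterate_add_apply, add_comm]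
  · intro hh
    apply hinj.iterate n
    rw [hh, ← Function.iterate_add_apply, ← Function.iterate_add_apply, add_comm]

include hinj in
lemma helper3 {n m : ℕ} {u x : M} (hu : s01^[n] u = x) (y : M) :
    s01^[m] y = u ↔ s01^[n + m] y = x := by
  subst hu
  rw [Function.iterate_add_apply]
  exact ⟨fun he => by rw [he], fun he => hinj.iterate n he⟩

include hinj in
lemma helper2 {K : ℕ} {β : Type*} {a b : β → M} (h : Econf K a b)
    {n m : ℕ} (hnm : n + m ≤ K) (p q : β) :
    s01^[n] (a p) = s01^[m] (a q) ↔ s01^[n] (b p) = s01^[m] (b q) := by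
  rcases le_total m n with hle | hle
  · rw [cancel01 hinj hle, cancel01 hinj hle]
    exact h p q (n - m) (by omega)
  · rw [cancel01' hinj hle, cancel01' hinj hle]
    exact ⟨fun hx => ((h q p (m - n) (by omega)).1 hx.symm).symm,
      fun hx => ((h q p (m - n) (by omega)).2 hx.symm).symm⟩

include hinj hzero hsurj hnocycle in
lemma extension {β : Type*} [Finite β] {a b : β → M} (i0 : β)
    (ha0 : a i0 = z01) (hb0 : b i0 = z01)
    (k : ℕ) (h : Econf (2 * k) a b) (c : M) :
    ∃ d : M, Econf k (fun o => Option.elim o c a) (fun o => Option.elim o d b) := by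
  by_cases hA : ∃ i, ∃ n ≤ k, s01^[n] (a i) = c ∨ s01^[n] c = a i
  · obtain ⟨i, n, hn, hrel | hrel⟩ := hA
    · refine ⟨s01^[n] (b i), ?_⟩
      rintro (_ | p) (_ | q) m hm
      · simp only [Option.elim]
        rw [cycle_iff hnocycle, cycle_iff hnocycle]
      · simp only [Option.elim]
        rw [← hrel, ← Function.iterate_add_apply, ← Function.iterate_add_apply]
        exact h i q (m + n) (by omega)
      · simp only [Option.elim]
        rw [← hrel]
        exact helper2 hinj h (by omega) p i
      · exact h p q m (by omega)
    · -- s01^[n] c = a i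
      have hd : ∃ d0 : M, s01^[n] d0 = b i := by
        rcases pred_exists hsurj n (b i) with ⟨y, hy⟩ | ⟨m, hm, hmz⟩
        · exact ⟨y, hy⟩
        · exfalso
          have h1 : s01^[m] (a i0) = a i := by
            refine (h i0 i m (by omega)).2 ?_
            rw [hb0]; exact hmz
          rw [ha0] at h1
          have h2 : s01^[n] c = s01^[m] z01 := by rw [hrel, ← h1]
          have h3 : s01^[n - m] c = z01 := (cancel01 hinj (by omega) _ _).1 h2
          rw [show n - m = (n - m - 1) + 1 by omega, Function.iterate_succ_apply'] at h3
          exact hzero _ h3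
      obtain ⟨d0, hd0⟩ := hd
      refine ⟨d0, ?_⟩
      rintro (_ | p) (_ | q) m hm
      · simp only [Option.elim]
        rw [cycle_iff hnocycle, cycle_iff hnocycle]
      · simp only [Option.elim]
        rw [helper1 hinj hrel (a q), helper1 hinj hd0 (b q)]
        exact helper2 hinj h (by omega) q i
      · simp only [Option.elim]
        rw [helper3 hinj hrel (a p), helper3 hinj hd0 (b p)]
        exact h p i (n + m) (by omega)
      · exact h p q m (by omega)
  · push_neg at hA
    have hfin := near_finite hinj (Set.finite_range b) k
    have : Infinite M := M_infinite hinj hnocycle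
    obtain ⟨d, hd⟩ := hfin.infinite_compl.nonempty
    rw [Set.mem_compl_iff] at hd
    refine ⟨d, ?_⟩
    rintro (_ | p) (_ | q) m hm
    · simp only [Option.elim]
      rw [cycle_iff hnocycle, cycle_iff hnocycle]
    · simp only [Option.elim]
      refine iff_of_false ?_ ?_
      · exact (hA q m hm).2
      · intro hc
        exact hd ⟨b q, Set.mem_range_self q, m, hm, Or.inl hc⟩
    · simp only [Option.elim]
      refine iff_of_false ?_ ?_
      · exact (hA p m hm).1
      · intro hc
        exact hd ⟨b p, Set.mem_range_self p, m, hm, Or.inr hc⟩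
    · exact h p q m (by omega)

/-- Characterization of terms: every term is an iterate of S applied to a variable or 0. -/
lemma term_char {β : Type*} (t : L01.Term β) :
    ∃ (m : ℕ) (o : Option β), ∀ e : β → M, t.realize e = s01^[m] (Option.elim o z01 e) := by
  induction t with
  | var i => exact ⟨0, some i, fun e => rfl⟩
  | @func l f ts ih =>
    match l, f, ts, ih with
    | 0, f, ts, ih =>
      refine ⟨0, none, fun e => ?_⟩
      show funMap f (fun i => (ts i).realize e) = s01^[0] z01
      have hf : f = Unit.unit := rfl
      simp only [Function.iterate_zero, id_eq, z01, constantMap]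
      congr 1
      funext i
      exact i.elim0
    | 1, f, ts, ih =>
      obtain ⟨m, o, ho⟩ := ih 0
      refine ⟨m + 1, o, fun e => ?_⟩
      show funMap f (fun i => (ts i).realize e) = s01^[m + 1] (Option.elim o z01 e)
      rw [Function.iterate_succ_apply', ← ho e]
      show funMap f _ = funMap (L := L01) (n := 1) Unit.unit ![(ts 0).realize e]
      congr 1
      funext i
      have : i = 0 := Subsingleton.elim i 0
      subst this
      rfl
    | (l + 2), f, ts, ih => exact Empty.elim f

/-- Reindexing map for the quantifier step. -/
def gmap {α : Type*} {n : ℕ} : Option (α ⊕ Fin (n + 1)) → Option (Option (α ⊕ Fin n))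
  | none => some none
  | some (Sum.inl i) => some (some (Sum.inl i))
  | some (Sum.inr j) => Fin.lastCases none (fun j' => some (some (Sum.inr j'))) j

lemma ext_snoc {α : Type*} {n : ℕ} (v : α → M) (xs : Fin n → M) (c : M) :
    (fun o => Option.elim o z01 (Sum.elim v (Fin.snoc xs c))) =
      (fun o => Option.elim o c (fun o' => Option.elim o' z01 (Sum.elim v xs))) ∘ gmap := by
  funext o
  rcases o with _ | i
  · rfl
  rcases i with i | j
  · rfl
  · refine Fin.lastCases ?_ ?_ j
    · simp [gmap, Fin.snoc_last]
    · intro j'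
      simp [gmap, Fin.snoc_castSucc]

include hinj hzero hsurj hnocycle in
lemma key {α : Type} [Finite α] : ∀ {n : ℕ} (φ : L01.BoundedFormula α n),
    ∃ K : ℕ, ∀ (v w : α → M) (xs ys : Fin n → M),
      Econf K (fun o => Option.elim o z01 (Sum.elim v xs))
        (fun o => Option.elim o z01 (Sum.elim w ys)) →
      (φ.Realize v xs ↔ φ.Realize w ys) := by
  intro n φ
  induction φ with
  | falsum => exact ⟨0, fun _ _ _ _ _ => Iff.rfl⟩
  | equal t₁ t₂ =>
    obtain ⟨m₁, o₁, h₁⟩ := term_char (M := M) t₁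
    obtain ⟨m₂, o₂, h₂⟩ := term_char (M := M) t₂
    refine ⟨m₁ + m₂, fun v w xs ys hE => ?_⟩
    show t₁.realize (Sum.elim v xs) = t₂.realize (Sum.elim v xs) ↔
      t₁.realize (Sum.elim w ys) = t₂.realize (Sum.elim w ys)
    rw [h₁, h₂, h₁, h₂]
    exact helper2 hinj hE le_rfl o₁ o₂
  | rel R ts => exact Empty.elim R
  | imp φ ψ ih₁ ih₂ =>
    obtain ⟨K₁, h₁⟩ := ih₁
    obtain ⟨K₂, h₂⟩ := ih₂
    refine ⟨max K₁ K₂, fun v w xs ys hE => ?_⟩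
    simp only [BoundedFormula.realize_imp]
    rw [h₁ v w xs ys (Econf_mono (le_max_left _ _) hE),
      h₂ v w xs ys (Econf_mono (le_max_right _ _) hE)]
  | all ψ ih =>
    rename_i nn
    obtain ⟨K, hK⟩ := ih
    refine ⟨2 * K, fun v w xs ys hE => ?_⟩
    simp only [BoundedFormula.realize_all]
    have main : ∀ (v w : α → M) (xs ys : Fin nn → M),
        Econf (2 * K) (fun o => Option.elim o z01 (Sum.elim v xs))
          (fun o => Option.elim o z01 (Sum.elim w ys)) →
        (∀ c : M, ψ.Realize v (Fin.snoc xs c)) → ∀ d : M, ψ.Realize w (Fin.snoc ys d) := by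
      intro v w xs ys hE H d
      obtain ⟨e, he⟩ := extension hinj hzero hsurj hnocycle
        (a := fun o => Option.elim o z01 (Sum.elim w ys))
        (b := fun o => Option.elim o z01 (Sum.elim v xs)) none rfl rfl K
        (Econf_symm hE) d
      have hcomp := Econf_comp he (gmap (α := α) (n := _))
      rw [← ext_snoc, ← ext_snoc] at hcomp
      exact (hK w v (Fin.snoc ys d) (Fin.snoc xs e) hcomp).2 (H e)
    exact ⟨fun H d => main v w xs ys hE H d, fun H c => main w v ys xs (Econf_symm hE) H c⟩

end SM

/-- The theory of an injective unary function `S` whose range is the complement of `{0}`,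
with no finite cycles, is strongly minimal: in every model, every subset definable by a
first-order formula with parameters is finite or cofinite. -/
theorem statement9 (M : Type) [L01.Structure M]
    (hinj : Function.Injective (s01 : M → M))
    (hzero : ∀ y : M, s01 y ≠ z01)
    (hsurj : ∀ x : M, x ≠ z01 → ∃ y : M, x = s01 y)
    (hnocycle : ∀ n : ℕ, 1 ≤ n → ∀ x : M, s01^[n] x ≠ x) :
    ∀ (k : ℕ) (φ : L01.Formula (Fin k ⊕ Unit)) (d : Fin k → M),
      {a : M | φ.Realize (Sum.elim d fun _ => a)}.Finite ∨
        {a : M | ¬ φ.Realize (Sum.elim d fun _ => a)}.Finite := by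
  intro k φ d
  obtain ⟨K, hK⟩ := key hinj hzero hsurj hnocycle φ
  set P : Set M := insert z01 (Set.range d) with hP
  have hPfin : P.Finite := (Set.finite_range d).insert _
  have hNear := near_finite hinj hPfin K
  have : Infinite M := M_infinite hinj hnocycle
  set N : Set M := {x : M | ∃ p ∈ P, ∃ n ≤ K, s01^[n] x = p ∨ s01^[n] p = x} with hN
  obtain ⟨a₀, ha₀⟩ := hNear.infinite_compl.nonempty
  rw [Set.mem_compl_iff] at ha₀
  have hsame : ∀ a a' : M, a ∉ N → a' ∉ N →
      (φ.Realize (Sum.elim d fun _ => a) ↔ φ.Realize (Sum.elim d fun _ => a')) := by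
    intro a a' ha ha'
    have hE : Econf K
        (fun o => Option.elim o z01
          (Sum.elim (Sum.elim d fun _ : Unit => a) (default : Fin 0 → M)))
        (fun o => Option.elim o z01
          (Sum.elim (Sum.elim d fun _ : Unit => a') (default : Fin 0 → M))) := by
      rintro (_ | (⟨i⟩ | ⟨u⟩) | j) (_ | (⟨i'⟩ | ⟨u'⟩) | j') m hm
      · exact Iff.rfl
      · exact Iff.rfl
      · -- z01 vs a-slot
        simp only [Option.elim, Sum.elim_inl, Sum.elim_inr]
        refine iff_of_false ?_ ?_
        · intro hc
          exact ha ⟨z01, Set.mem_insert _ _, m, hm, Or.inr hc⟩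
        · intro hc
          exact ha' ⟨z01, Set.mem_insert _ _, m, hm, Or.inr hc⟩
      · exact j'.elim0
      · exact Iff.rfl
      · exact Iff.rfl
      · simp only [Option.elim, Sum.elim_inl, Sum.elim_inr]
        refine iff_of_false ?_ ?_
        · intro hc
          exact ha ⟨d i, Set.mem_insert_of_mem _ (Set.mem_range_self i), m, hm, Or.inr hc⟩
        · intro hc
          exact ha' ⟨d i, Set.mem_insert_of_mem _ (Set.mem_range_self i), m, hm, Or.inr hc⟩
      · exact j'.elim0
      · simp only [Option.elim, Sum.elim_inl, Sum.elim_inr]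
        refine iff_of_false ?_ ?_
        · intro hc
          exact ha ⟨z01, Set.mem_insert _ _, m, hm, Or.inl hc⟩
        · intro hc
          exact ha' ⟨z01, Set.mem_insert _ _, m, hm, Or.inl hc⟩
      · simp only [Option.elim, Sum.elim_inl, Sum.elim_inr]
        refine iff_of_false ?_ ?_
        · intro hc
          exact ha ⟨d i', Set.mem_insert_of_mem _ (Set.mem_range_self i'), m, hm, Or.inl hc⟩
        · intro hc
          exact ha' ⟨d i', Set.mem_insert_of_mem _ (Set.mem_range_self i'), m, hm, Or.inl hc⟩
      · simp only [Option.elim, Sum.elim_inl, Sum.elim_inr]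
        rw [cycle_iff hnocycle, cycle_iff hnocycle]
      · exact j'.elim0
      · exact j.elim0
      · exact j.elim0
      · exact j.elim0
      · exact j.elim0
    exact hK _ _ _ _ hE
  by_cases h0 : φ.Realize (Sum.elim d fun _ => a₀)
  · right
    refine hNear.subset ?_
    intro a hna
    by_contra haN
    exact hna ((hsame a a₀ haN ha₀).2 h0)
  · left
    refine hNear.subset ?_
    intro a hra
    by_contra haN
    exact h0 ((hsame a a₀ haN ha₀).1 hra)
end

section
/- (ℕ, succ, 0) embeds into every model of the theory T stating that S is injective and that the range of S is the complement of {0}; i.e., (ℕ, succ, 0) is an algebraically prime model of T. -/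
universe u

/-- (ℕ, succ, 0) embeds into every model of the theory stating that `S` is injective and
the range of `S` is the complement of `{0}`: it is an algebraically prime model. -/
theorem statement12 (M : Type u) (z : M) (s : M → M)
    (hinj : Function.Injective s)
    (hzero : ∀ y : M, s y ≠ z)
    (hsurj : ∀ x : M, x ≠ z → ∃ y : M, x = s y) :
    ∃ h : ℕ → M, Function.Injective h ∧ h 0 = z ∧ ∀ n : ℕ, h (n + 1) = s (h n) := by
  refine ⟨fun n => s^[n] z, ?_, rfl, fun n => Function.iterate_succ_apply' s n z⟩
  intro m n
  induction m generalizing n with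
  | zero =>
    intro h
    cases n with
    | zero => rfl
    | succ k =>
      simp only [Function.iterate_succ_apply'] at h
      exact absurd h.symm (hzero _)
  | succ k ih =>
    intro h
    cases n with
    | zero =>
      simp only [Function.iterate_succ_apply'] at h
      exact absurd h (hzero _)
    | succ l =>
      simp only [Function.iterate_succ_apply'] at h
      exact congrArg Nat.succ (ih (hinj h))
end

section
/- A countable structure M in a countable vocabulary is non-generative (not isomorphic to any proper substructure of itself) if, whenever N is a structure with M ⊆ N a substructure and N ≡∞ω M (N and M are back-and-forth equivalent), then N = M — and conversely. -/
open FirstOrder FirstOrder.Language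

/-- Back-and-forth (∞,ω-) equivalence of two structures: there is a nonempty family of
partial isomorphisms with the back and forth extension properties. -/
def BackForthEquiv (L : FirstOrder.Language.{0, 0}) (A B : Type)
    [L.Structure A] [L.Structure B] : Prop :=
  ∃ I : Set (A ≃ₚ[L] B), I.Nonempty ∧
    (∀ f ∈ I, ∀ a : A, ∃ g ∈ I, f ≤ g ∧ a ∈ g.dom) ∧
    (∀ f ∈ I, ∀ b : B, ∃ g ∈ I, f ≤ g ∧ b ∈ g.cod)

/-- A witness that `M` has an extension `N` (with `M` sitting inside `N` as the substructure
`S`) which is back-and-forth equivalent to `M`. -/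
structure ExtensionBFEquiv (L : FirstOrder.Language.{0, 0}) (M : Type) [L.Structure M] :
    Type 1 where
  N : Type
  [str : L.Structure N]
  S : L.Substructure N
  isoSub : M ≃[L] S
  bf : BackForthEquiv L N M

/-- For a countable structure `M` in a countable vocabulary: `M` is non-generative (not
isomorphic to any proper substructure of itself) iff whenever `N` is a structure with `M` a
substructure of `N` and `N` back-and-forth equivalent to `M`, then `N = M` (i.e. the copy of
`M` is all of `N`). -/
theorem statement16 (L : FirstOrder.Language.{0, 0}) [Countable L.Symbols]
    (M : Type) [L.Structure M] [Countable M] :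
    (¬ ∃ S : L.Substructure M, S ≠ ⊤ ∧ Nonempty (M ≃[L] S)) ↔
      ∀ e : ExtensionBFEquiv L M, e.S = ⊤ := by
  constructor
  · intro h1 e
    letI := e.str
    by_contra hne
    -- pick a point outside the copy of M
    obtain ⟨a, ha⟩ : ∃ a : e.N, a ∉ e.S := by
      by_contra hc
      push_neg at hc
      exact hne (top_le_iff.mp (fun x _ => hc x))
    obtain ⟨I, ⟨f0, hf0⟩, hforth, _⟩ := e.bf
    -- the countable set we want to cover
    haveI : Countable e.S := Countable.of_equiv M e.isoSub.toEquiv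
    have hXc : ((e.S : Set e.N) ∪ {a}).Countable :=
      (Set.countable_coe_iff.mp inferInstance).union (Set.countable_singleton a)
    obtain ⟨u, hu⟩ := hXc.exists_eq_range ⟨a, Or.inr rfl⟩
    -- build a chain of partial equivalences
    let F : ℕ → {f : e.N ≃ₚ[L] M // f ∈ I} := fun n =>
      Nat.rec ⟨f0, hf0⟩
        (fun n p => ⟨(hforth p.1 p.2 (u n)).choose, (hforth p.1 p.2 (u n)).choose_spec.1⟩) n
    have hsucc : ∀ n, (F n).1 ≤ (F (n + 1)).1 ∧ u n ∈ (F (n + 1)).1.dom := fun n =>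
      ⟨(hforth (F n).1 (F n).2 (u n)).choose_spec.2.1,
       (hforth (F n).1 (F n).2 (u n)).choose_spec.2.2⟩
    have hmono : Monotone (fun n => (F n).1) :=
      monotone_nat_of_le_succ (fun n => (hsucc n).1)
    let S' : ℕ →o (e.N ≃ₚ[L] M) := ⟨fun n => (F n).1, hmono⟩
    let lim := DirectLimit.partialEquivLimit S'
    have hmem : ∀ y ∈ (e.S : Set e.N) ∪ {a}, y ∈ lim.dom := by
      intro y hy
      rw [hu] at hy
      obtain ⟨n, rfl⟩ := hy
      have h1' : u n ∈ (F (n + 1)).1.dom := (hsucc n).2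
      have : (F (n + 1)).1.dom ≤ lim.dom :=
        PartialEquiv.dom_le_dom (DirectLimit.le_partialEquivLimit S' (n + 1))
      exact this h1'
    have hS_le : e.S ≤ lim.dom := fun y hy => hmem y (Or.inl hy)
    have ha_mem : a ∈ lim.dom := hmem a (Or.inr rfl)
    -- the self-embedding of M
    let emb : ↥lim.dom ↪[L] M := lim.toEmbedding
    let h : M ↪[L] M :=
      emb.comp ((Substructure.inclusion hS_le).comp e.isoSub.toEmbedding)
    apply h1
    refine ⟨h.toHom.range, ?_, ⟨h.equivRange⟩⟩
    intro htop
    have hb : emb ⟨a, ha_mem⟩ ∈ h.toHom.range := htop ▸ Substructure.mem_top _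
    obtain ⟨m, hm⟩ := hb
    have hm' : emb ((Substructure.inclusion hS_le) (e.isoSub.toEmbedding m))
        = emb ⟨a, ha_mem⟩ := hm
    have := emb.injective hm'
    have hcoe : ((e.isoSub.toEmbedding m : ↥e.S) : e.N) = a := congrArg Subtype.val this
    exact ha (hcoe ▸ (e.isoSub.toEmbedding m : ↥e.S).2)
  · intro h2
    rintro ⟨S₀, hne, ⟨i⟩⟩
    have bf : BackForthEquiv L M M := by
      refine ⟨{(default : M ≃ₚ[L] M)}, ⟨default, rfl⟩, ?_, ?_⟩
      · intro f hf x
        rw [Set.mem_singleton_iff] at hf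
        subst hf
        exact ⟨_, rfl, le_refl _, Substructure.mem_top x⟩
      · intro f hf x
        rw [Set.mem_singleton_iff] at hf
        subst hf
        exact ⟨_, rfl, le_refl _, Substructure.mem_top x⟩
    exact hne (h2 ⟨M, S₀, i, bf⟩)
end
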